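/- For every 0 ≤ p ≤ m, every 0 ≤ r < k^p, and every leaf i ∈ J(p,r): Σ_{u ∈ J(p,r)} C_{iu} = σ²·(1 + (k−1)ρ)^{m−p}. In particular (the case p = 0) every row of C(k,m,ρ,σ) sums to σ²·(1 + (k−1)ρ)^m. -/

import Mathlib

open MeasureTheory ProbabilityTheory
open scoped Classical

/-- `lcaHeight k i j` is the height above the leaves of the lowest common ancestor of
leaves `i` and `j` in the infinite `k`-ary tree: the least `l ≥ 1` with `⌊i/k^l⌋ = ⌊j/k^l⌋`. -/
noncomputable def lcaHeight (k i j : ℕ) : ℕ := sInf {l | 1 ≤ l ∧ i / k ^ l = j / k ^ l}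

/-- The covariance matrix of the regular `(k,m)` conditionally independent Gaussian tree with
leaf standard deviation `σ` and dependency parameter `ρ`. -/
noncomputable def treeCov (k m : ℕ) (ρ σ : ℝ) : Matrix (Fin (k ^ m)) (Fin (k ^ m)) ℝ :=
  Matrix.of fun i j =>
    if (i : ℕ) = (j : ℕ) then σ ^ 2
    else σ ^ 2 * ρ * (1 / (k : ℝ) + (1 - 1 / (k : ℝ)) * ρ) ^ (lcaHeight k i j - 1)

/-- `treeBlock k m p r` is the set `J(p,r)` of leaves of the regular `(k,m)` tree descending
from the `r`-th node at level `p`. -/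
def treeBlock (k m p r : ℕ) : Finset (Fin (k ^ m)) :=
  Finset.univ.filter fun i => (i : ℕ) / k ^ (m - p) = r

/-!
Around a leaf `i`, the leaves below its ancestor at height `n` are `i` itself together with,
for each `l < n`, the `(k - 1) k^l` leaves whose lowest common ancestor with `i` sits at
height `l + 1`; each of these contributes `σ² ρ q^l`. Since `k q = 1 + (k - 1) ρ =: a`, the
block sum is `σ² (1 + (a - 1) ∑_{l<n} a^l) = σ² aⁿ`, a geometric series.
-/

open Finset

lemma div_pow_eq_div_pow_of_le {k i u l n : ℕ} (h : i / k ^ l = u / k ^ l) (hln : l ≤ n) :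
    i / k ^ n = u / k ^ n := by
  rw [← Nat.add_sub_cancel' hln, pow_add, ← Nat.div_div_eq_div_mul, ← Nat.div_div_eq_div_mul, h]

lemma lcaHeight_eq_succ {k i u n : ℕ} (hsucc : i / k ^ (n + 1) = u / k ^ (n + 1))
    (hne : i / k ^ n ≠ u / k ^ n) : lcaHeight k i u = n + 1 := by
  have hmem : n + 1 ∈ {l | 1 ≤ l ∧ i / k ^ l = u / k ^ l} := ⟨by omega, hsucc⟩
  refine le_antisymm (Nat.sInf_le hmem) (le_csInf ⟨_, hmem⟩ ?_)
  rintro l ⟨-, hl⟩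
  by_contra! hlt
  exact hne (div_pow_eq_div_pow_of_le hl (by omega))

lemma filter_range_div_eq {N d c : ℕ} (hd : 0 < d) (hN : (c + 1) * d ≤ N) :
    (range N).filter (fun u => u / d = c) = Ico (c * d) (c * d + d) := by
  ext u
  simp only [mem_filter, mem_range, mem_Ico, Nat.div_eq_iff hd]
  constructor
  · rintro ⟨-, hlo, hhi⟩
    exact ⟨hlo, by omega⟩
  · rintro ⟨hlo, hhi⟩
    exact ⟨by linarith [add_one_mul c d], hlo, by omega⟩

def ancestorBlock (k N n i : ℕ) : Finset ℕ :=
  (range N).filter fun u => u / k ^ n = i / k ^ n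

section ancestorBlock

variable {k N n i : ℕ}

lemma ancestorBlock_zero (hi : i < N) : ancestorBlock k N 0 i = {i} := by
  ext u
  simp only [ancestorBlock, mem_filter, mem_range, pow_zero, Nat.div_one, mem_singleton]
  constructor
  · exact fun h => h.2
  · rintro rfl
    exact ⟨hi, rfl⟩

lemma self_mem_ancestorBlock (hi : i < N) : i ∈ ancestorBlock k N n i :=
  mem_filter.2 ⟨mem_range.2 hi, rfl⟩

lemma ancestorBlock_subset_succ : ancestorBlock k N n i ⊆ ancestorBlock k N (n + 1) i :=
  monotone_filter_right _ fun _ _ h => div_pow_eq_div_pow_of_le h n.le_succ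

lemma card_ancestorBlock {m : ℕ} (hk : 0 < k) (hi : i < k ^ m) (hn : n ≤ m) :
    #(ancestorBlock k (k ^ m) n i) = k ^ n := by
  have hkn : 0 < k ^ n := pow_pos hk n
  have hanc : i / k ^ n < k ^ (m - n) := by
    rwa [Nat.div_lt_iff_lt_mul hkn, ← pow_add, Nat.sub_add_cancel hn]
  have hfit : (i / k ^ n + 1) * k ^ n ≤ k ^ m := by
    calc (i / k ^ n + 1) * k ^ n ≤ k ^ (m - n) * k ^ n := Nat.mul_le_mul_right _ hanc
      _ = k ^ m := by rw [← pow_add, Nat.sub_add_cancel hn]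
  rw [ancestorBlock, filter_range_div_eq hkn hfit, Nat.card_Ico]
  omega

lemma lcaHeight_of_mem_sdiff {u : ℕ}
    (hu : u ∈ ancestorBlock k N (n + 1) i \ ancestorBlock k N n i) :
    lcaHeight k i u = n + 1 := by
  simp only [ancestorBlock, mem_sdiff, mem_filter] at hu
  obtain ⟨⟨huN, hsucc⟩, hnot⟩ := hu
  exact lcaHeight_eq_succ hsucc.symm fun h => hnot ⟨huN, h.symm⟩

lemma sum_ancestorBlock_of_lcaHeight {M : Type*} [AddCommMonoid M] {m : ℕ} (hk : 0 < k)
    (hi : i < k ^ m) (f g : ℕ → M) (hfg : ∀ u, u ≠ i → f u = g (lcaHeight k i u))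
    (hn : n ≤ m) :
    ∑ u ∈ ancestorBlock k (k ^ m) n i, f u
      = f i + ∑ l ∈ range n, ((k - 1) * k ^ l) • g (l + 1) := by
  induction n with
  | zero =>
    rw [ancestorBlock_zero hi, sum_singleton, sum_range_zero, add_zero]
  | succ n ih =>
    have hlayer : ∀ u ∈ ancestorBlock k (k ^ m) (n + 1) i \ ancestorBlock k (k ^ m) n i,
        f u = g (n + 1) := by
      intro u hu
      have hui : u ≠ i := by
        rintro rfl
        exact (mem_sdiff.1 hu).2 (self_mem_ancestorBlock hi)
      rw [hfg u hui, lcaHeight_of_mem_sdiff hu]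
    have hcard : #(ancestorBlock k (k ^ m) (n + 1) i \ ancestorBlock k (k ^ m) n i)
        = (k - 1) * k ^ n := by
      rw [card_sdiff_of_subset ancestorBlock_subset_succ, card_ancestorBlock hk hi hn,
        card_ancestorBlock hk hi (by omega), pow_succ, Nat.mul_comm, Nat.sub_one_mul]
    rw [← sum_sdiff ancestorBlock_subset_succ, sum_congr rfl hlayer, sum_const, hcard,
      ih (by omega), sum_range_succ]
    abel

end ancestorBlock

lemma treeCov_layer_sum_eq {k : ℕ} (hk : 0 < k) (σ ρ : ℝ) (n : ℕ) :
    σ ^ 2 + ∑ l ∈ range n,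
        ((k - 1) * k ^ l) • (σ ^ 2 * ρ * (1 / (k : ℝ) + (1 - 1 / (k : ℝ)) * ρ) ^ l)
      = σ ^ 2 * (1 + ((k : ℝ) - 1) * ρ) ^ n := by
  set a : ℝ := 1 + ((k : ℝ) - 1) * ρ
  have hkq : (k : ℝ) * (1 / (k : ℝ) + (1 - 1 / (k : ℝ)) * ρ) = a := by
    field_simp
    ring
  have ha : a - 1 = ((k : ℝ) - 1) * ρ := add_sub_cancel_left 1 _
  have hterm : ∀ l, ((k - 1) * k ^ l) • (σ ^ 2 * ρ * (1 / (k : ℝ) + (1 - 1 / (k : ℝ)) * ρ) ^ l)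
      = σ ^ 2 * (a ^ l * (a - 1)) := by
    intro l
    rw [nsmul_eq_mul, Nat.cast_mul, Nat.cast_pred hk, Nat.cast_pow, ha, ← hkq, mul_pow]
    ring
  rw [sum_congr rfl fun l _ => hterm l, ← mul_sum, ← sum_mul, geom_sum_mul]
  ring

lemma map_treeBlock_eq_ancestorBlock {k m p r : ℕ} {i : Fin (k ^ m)}
    (hi : i ∈ treeBlock k m p r) :
    (treeBlock k m p r).map Fin.valEmbedding = ancestorBlock k (k ^ m) (m - p) i := by
  simp only [treeBlock, mem_filter, mem_univ, true_and] at hi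
  ext u
  simp only [treeBlock, ancestorBlock, mem_map, mem_filter, mem_univ, true_and, mem_range,
    Fin.valEmbedding_apply, hi]
  constructor
  · rintro ⟨v, hv, rfl⟩
    exact ⟨v.isLt, hv⟩
  · rintro ⟨hu, hur⟩
    exact ⟨⟨u, hu⟩, hur, rfl⟩

theorem treeCov_row_block_sum_general (k m : ℕ) (hk : 2 ≤ k) (σ ρ : ℝ)
    (p r : ℕ) (i : Fin (k ^ m)) (hi : i ∈ treeBlock k m p r) :
    ∑ u ∈ treeBlock k m p r, treeCov k m ρ σ i u
      = σ ^ 2 * (1 + ((k : ℝ) - 1) * ρ) ^ (m - p) := by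
  set q : ℝ := 1 / (k : ℝ) + (1 - 1 / (k : ℝ)) * ρ
  have hk0 : 0 < k := by omega
  calc ∑ u ∈ treeBlock k m p r, treeCov k m ρ σ i u
      = ∑ u ∈ ancestorBlock k (k ^ m) (m - p) i,
          if (i : ℕ) = u then σ ^ 2 else σ ^ 2 * ρ * q ^ (lcaHeight k i u - 1) := by
        rw [← map_treeBlock_eq_ancestorBlock hi, sum_map]
        rfl
    _ = σ ^ 2 + ∑ l ∈ range (m - p), ((k - 1) * k ^ l) • (σ ^ 2 * ρ * q ^ (l + 1 - 1)) := by
        rw [sum_ancestorBlock_of_lcaHeight hk0 i.isLt _ (fun l => σ ^ 2 * ρ * q ^ (l - 1))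
          (fun u hu => if_neg (Ne.symm hu)) (Nat.sub_le m p), if_pos rfl]
    _ = σ ^ 2 * (1 + ((k : ℝ) - 1) * ρ) ^ (m - p) := by
        simpa only [Nat.add_sub_cancel] using treeCov_layer_sum_eq hk0 σ ρ (m - p)

/-- Row sums of the tree covariance matrix over a subtree block: for any level `p ≤ m`,
any node index `r < k^p`, and any leaf `i` in the block `J(p,r)`,
`∑_{u ∈ J(p,r)} C_{iu} = σ²·(1 + (k-1)ρ)^(m-p)`. In particular (case `p = 0`) every row of
`C(k,m,ρ,σ)` sums to `σ²·(1 + (k-1)ρ)^m`. -/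
theorem treeCov_row_block_sum (k m : ℕ) (hk : 2 ≤ k) (hm : 1 ≤ m) (σ ρ : ℝ) (hσ : 0 < σ)
    (hρ_lb : -(1 / ((k : ℝ) - 1)) < ρ) (hρ_ub : ρ < 1)
    (p r : ℕ) (hp : p ≤ m) (hr : r < k ^ p) (i : Fin (k ^ m)) (hi : i ∈ treeBlock k m p r) :
    ∑ u ∈ treeBlock k m p r, treeCov k m ρ σ i u
      = σ ^ 2 * (1 + ((k : ℝ) - 1) * ρ) ^ (m - p) :=
  treeCov_row_block_sum_general k m hk σ ρ p r i hi
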